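/- (Lemma 1) For all indices 1 ≤ k < j ≤ n, the diagonal matrix element of the dynamical R-matrix factorizes: 1 + Σ_{i=k}^{j−1} Φ_{ij} Ψ_{ij} q^{y_j − y_i + 1} ([l][l+1])^{j−i} = ∏_{i=k}^{j−1} (1 − [l][l+1] ξ(y_j − y_i)). -/

import Mathlib

/-- The symmetric q-integer `[m] = (q^m - q^{-m})/(q - q⁻¹)` (real powers). -/
noncomputable def qint (q : ℝ) (m : ℤ) : ℝ :=
  (q ^ (m : ℝ) - q ^ (-(m : ℝ))) / (q - q⁻¹)

/-- `ξ(y) = (q - q⁻¹)² q^{y+1} / ((q^y - 1)(q^{y+2} - 1))`. -/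
noncomputable def xi (q y : ℝ) : ℝ :=
  (q - q⁻¹) ^ 2 * q ^ (y + 1) / ((q ^ y - 1) * (q ^ (y + 2) - 1))

/-- The coefficients `Φ_{ij}` defined by the downward recursion
`Φ_{j-1,j} = (q - q⁻¹)/(q^{y_j - y_{j-1} + 2} - 1)` and
`Φ_{ij} = Φ_{i+1,j} · q_l⁻¹ · (q^{y_j - y_{i+1} + 2} - q^{-2l})/(q^{y_j - y_i + 2} - 1)`. -/
noncomputable def Phi (q ql : ℝ) (l : ℕ) (y : ℕ → ℝ) (i j : ℕ) : ℝ :=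
  if i + 1 < j then
    Phi q ql l y (i + 1) j * ql⁻¹ *
      (q ^ (y j - y (i + 1) + 2) - q ^ (-(2 * (l : ℝ)))) / (q ^ (y j - y i + 2) - 1)
  else (q - q⁻¹) / (q ^ (y j - y i + 2) - 1)
termination_by j - i
decreasing_by omega

/-- The coefficients `Ψ_{ij}` defined by the downward recursion
`Ψ_{j-1,j} = (q - q⁻¹)/(1 - q^{y_j - y_{j-1}})` and
`Ψ_{ij} = q^{-l}[l]⁻¹ · (q^{y_j - y_{i+1}} - q^{2l})/(q^{y_j - y_i} - 1) · Ψ_{i+1,j}`. -/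
noncomputable def Psi (q : ℝ) (l : ℕ) (y : ℕ → ℝ) (i j : ℕ) : ℝ :=
  if i + 1 < j then
    q ^ (-(l : ℝ)) * (qint q l)⁻¹ *
      (q ^ (y j - y (i + 1)) - q ^ (2 * (l : ℝ))) / (q ^ (y j - y i) - 1) *
      Psi q l y (i + 1) j
  else (q - q⁻¹) / (1 - q ^ (y j - y i))
termination_by j - i
decreasing_by omega

section Aux

lemma rpow_exp_inj {q : ℝ} (hq : 0 < q) (hq1 : q ≠ 1) {a b : ℝ} (h : q ^ a = q ^ b) :
    a = b := by
  rw [Real.rpow_def_of_pos hq, Real.rpow_def_of_pos hq] at h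
  exact mul_left_cancel₀ (Real.log_ne_zero_of_pos_of_ne_one hq hq1) (Real.exp_injective h)

lemma rpow_ne_one' {q : ℝ} (hq : 0 < q) (hq1 : q ≠ 1) {x : ℝ} (hx : x ≠ 0) : q ^ x ≠ 1 := by
  intro h
  exact hx (rpow_exp_inj hq hq1 (by rw [h, Real.rpow_zero]))

lemma qsub_ne {q : ℝ} (hq : 0 < q) (hq1 : q ≠ 1) : q - q⁻¹ ≠ 0 := by
  intro h
  have hq0 : q ≠ 0 := ne_of_gt hq
  have h' : q = q⁻¹ := sub_eq_zero.mp h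
  have h2 : q * q = 1 := by nth_rewrite 2 [h']; exact mul_inv_cancel₀ hq0
  have h3 : (q - 1) * (q + 1) = 0 := by linear_combination h2
  rcases mul_eq_zero.mp h3 with h4 | h4
  · exact hq1 (by linarith [sub_eq_zero.mp h4])
  · linarith

lemma qint_ne {q : ℝ} (hq : 0 < q) (hq1 : q ≠ 1) {m : ℤ} (hm : m ≠ 0) : qint q m ≠ 0 := by
  apply div_ne_zero _ (qsub_ne hq hq1)
  rw [sub_ne_zero]
  intro h
  have h2 := rpow_exp_inj hq hq1 h
  have h3 : (m : ℝ) = 0 := by linarith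
  exact hm (by exact_mod_cast h3)

lemma rpow_two' (x : ℝ) : x ^ (2 : ℝ) = x ^ 2 := by
  rw [show (2 : ℝ) = ((2 : ℕ) : ℝ) by norm_num, Real.rpow_natCast]

/-- The scalar identity driving the inductive step. -/
lemma step_scalar (Q L a b c1 c2 : ℝ) (hc1 : c1 ≠ 0) (hc2 : c2 ≠ 0) (hL : L ≠ 0)
    (ha : a - 1 ≠ 0) (ha2 : a * Q ^ 2 - 1 ≠ 0) (hb : b - 1 ≠ 0) (hb2 : b * Q ^ 2 - 1 ≠ 0)
    (key : (b * Q ^ 2 - (L ^ 2)⁻¹) * (b - L ^ 2) =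
      (b - 1) * (b * Q ^ 2 - 1) - c1 * c2 * (Q - Q⁻¹) ^ 2 * (b * Q)) :
    (c2 * L⁻¹)⁻¹ * (b * Q ^ 2 - (L ^ 2)⁻¹) / (a * Q ^ 2 - 1) *
        (L⁻¹ * c1⁻¹ * (b - L ^ 2) / (a - 1)) * (a * Q) * (c1 * c2) *
        (-(c1 * c2 * ((Q - Q⁻¹) ^ 2 * (b * Q) / ((b - 1) * (b * Q ^ 2 - 1))))) =
      -(c1 * c2 * ((Q - Q⁻¹) ^ 2 * (a * Q) / ((a - 1) * (a * Q ^ 2 - 1)))) *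
        (1 - c1 * c2 * ((Q - Q⁻¹) ^ 2 * (b * Q) / ((b - 1) * (b * Q ^ 2 - 1)))) * (b * Q) := by
  have hX : (c2 * L⁻¹)⁻¹ * (L⁻¹ * c1⁻¹) * (c1 * c2) = 1 := by
    field_simp
  have step1 : (c2 * L⁻¹)⁻¹ * (b * Q ^ 2 - (L ^ 2)⁻¹) / (a * Q ^ 2 - 1) *
        (L⁻¹ * c1⁻¹ * (b - L ^ 2) / (a - 1)) * (a * Q) * (c1 * c2) *
        (-(c1 * c2 * ((Q - Q⁻¹) ^ 2 * (b * Q) / ((b - 1) * (b * Q ^ 2 - 1))))) =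
      (b * Q ^ 2 - (L ^ 2)⁻¹) * (b - L ^ 2) *
        ((c2 * L⁻¹)⁻¹ * (L⁻¹ * c1⁻¹) * (c1 * c2) *
          (a * Q / (a * Q ^ 2 - 1) / (a - 1) *
            (-(c1 * c2 * ((Q - Q⁻¹) ^ 2 * (b * Q) / ((b - 1) * (b * Q ^ 2 - 1))))))) := by
    ring
  rw [step1, key, hX, one_mul]
  field_simp

end Aux

set_option maxHeartbeats 1000000 in
/-- The key term identity: each summand equals a difference of partial products. -/
theorem term_eq (q : ℝ) (hq : 0 < q) (hq1 : q ≠ 1) (l : ℕ) (hl : 0 < l)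
    (ql : ℝ) (hql : ql = qint q (l + 1) * q ^ (-(l : ℝ))) (y : ℕ → ℝ) (j i : ℕ)
    (hij : i < j)
    (hY : ∀ m, i ≤ m → m < j → y j - y m ≠ 0 ∧ y j - y m ≠ -2) :
    Phi q ql l y i j * Psi q l y i j * q ^ (y j - y i + 1) *
        (qint q l * qint q (l + 1)) ^ (j - i) =
      -(qint q l * qint q (l + 1) * xi q (y j - y i)) *
        ∏ m ∈ Finset.Ico (i + 1) j, (1 - qint q l * qint q (l + 1) * xi q (y j - y m)) := by
  obtain ⟨hu0, hu2'⟩ := hY i le_rfl hij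
  have hu1 : q ^ (y j - y i + 1) = q ^ (y j - y i) * q := by
    rw [Real.rpow_add hq, Real.rpow_one]
  have hu2 : q ^ (y j - y i + 2) = q ^ (y j - y i) * q ^ 2 := by
    rw [Real.rpow_add hq, rpow_two']
  have ha1 : q ^ (y j - y i) - 1 ≠ 0 := sub_ne_zero.mpr (rpow_ne_one' hq hq1 hu0)
  have ha2 : q ^ (y j - y i) * q ^ 2 - 1 ≠ 0 := by
    rw [← hu2]
    exact sub_ne_zero.mpr (rpow_ne_one' hq hq1 (by intro h; exact hu2' (by linarith)))
  by_cases hc : i + 1 < j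
  · -- inductive step
    obtain ⟨hv0, hv2'⟩ := hY (i + 1) (by omega) hc
    have hv1 : q ^ (y j - y (i + 1) + 1) = q ^ (y j - y (i + 1)) * q := by
      rw [Real.rpow_add hq, Real.rpow_one]
    have hv2 : q ^ (y j - y (i + 1) + 2) = q ^ (y j - y (i + 1)) * q ^ 2 := by
      rw [Real.rpow_add hq, rpow_two']
    have hb1 : q ^ (y j - y (i + 1)) - 1 ≠ 0 := sub_ne_zero.mpr (rpow_ne_one' hq hq1 hv0)
    have hb2 : q ^ (y j - y (i + 1)) * q ^ 2 - 1 ≠ 0 := by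
      rw [← hv2]
      exact sub_ne_zero.mpr (rpow_ne_one' hq hq1 (by intro h; exact hv2' (by linarith)))
    have hc1 : qint q l ≠ 0 := qint_ne hq hq1 (by exact_mod_cast hl.ne')
    have hc2 : qint q (l + 1) ≠ 0 := qint_ne hq hq1 (by omega)
    have hL : q ^ ((l : ℝ)) ≠ 0 := (Real.rpow_pos_of_pos hq _).ne'
    have hml : q ^ (-(l : ℝ)) = (q ^ ((l : ℝ)))⁻¹ := by rw [Real.rpow_neg hq.le]
    have h2l : q ^ (2 * (l : ℝ)) = (q ^ ((l : ℝ))) ^ 2 := by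
      rw [mul_comm, Real.rpow_mul hq.le, rpow_two']
    have hm2l : q ^ (-(2 * (l : ℝ))) = ((q ^ ((l : ℝ))) ^ 2)⁻¹ := by
      rw [Real.rpow_neg hq.le, h2l]
    have hqlinv : ql⁻¹ = (qint q (l + 1) * (q ^ ((l : ℝ)))⁻¹)⁻¹ := by rw [hql, hml]
    have e1 : qint q l * (q - q⁻¹) = q ^ ((l : ℝ)) - (q ^ ((l : ℝ)))⁻¹ := by
      simp only [qint, Int.cast_natCast]
      rw [div_mul_cancel₀ _ (qsub_ne hq hq1), Real.rpow_neg hq.le]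
    have e2 : qint q (l + 1) * (q - q⁻¹) = q ^ ((l : ℝ)) * q - (q ^ ((l : ℝ)) * q)⁻¹ := by
      simp only [qint]
      push_cast
      rw [div_mul_cancel₀ _ (qsub_ne hq hq1), Real.rpow_neg hq.le, Real.rpow_add hq,
        Real.rpow_one]
    have key : (q ^ (y j - y (i + 1)) * q ^ 2 - ((q ^ ((l : ℝ))) ^ 2)⁻¹) *
          (q ^ (y j - y (i + 1)) - (q ^ ((l : ℝ))) ^ 2) =
        (q ^ (y j - y (i + 1)) - 1) * (q ^ (y j - y (i + 1)) * q ^ 2 - 1) -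
          qint q l * qint q (l + 1) * (q - q⁻¹) ^ 2 * (q ^ (y j - y (i + 1)) * q) := by
      have hm : qint q l * qint q (l + 1) * (q - q⁻¹) ^ 2 =
          (q ^ ((l : ℝ)) - (q ^ ((l : ℝ)))⁻¹) * (q ^ ((l : ℝ)) * q - (q ^ ((l : ℝ)) * q)⁻¹) := by
        calc qint q l * qint q (l + 1) * (q - q⁻¹) ^ 2
            = (qint q l * (q - q⁻¹)) * (qint q (l + 1) * (q - q⁻¹)) := by ring
          _ = _ := by rw [e1, e2]
      rw [hm]
      field_simp
      ring
    have hscal := step_scalar q (q ^ ((l : ℝ))) (q ^ (y j - y i)) (q ^ (y j - y (i + 1)))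
      (qint q l) (qint q (l + 1)) hc1 hc2 hL ha1 ha2 hb1 hb2 key
    have hxiv : xi q (y j - y (i + 1)) ≠ 0 := by
      rw [xi]
      exact div_ne_zero
        (mul_ne_zero (pow_ne_zero _ (qsub_ne hq hq1)) (Real.rpow_pos_of_pos hq _).ne')
        (mul_ne_zero hb1 (by rw [hv2]; exact hb2))
    have hcne : -(qint q l * qint q (l + 1) * xi q (y j - y (i + 1))) ≠ 0 :=
      neg_ne_zero.mpr (mul_ne_zero (mul_ne_zero hc1 hc2) hxiv)
    have IH := term_eq q hq hq1 l hl ql hql y j (i + 1) hc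
      (fun m h1 h2 => hY m (by omega) h2)
    have hd : j - i = j - (i + 1) + 1 := by omega
    rw [Phi, Psi, if_pos hc, if_pos hc, Finset.prod_eq_prod_Ico_succ_bot hc, hd, pow_succ]
    refine mul_right_cancel₀ hcne ?_
    simp only [xi, hqlinv, hu1, hu2, hv1, hv2, hml, hm2l, h2l] at IH ⊢
    linear_combination
      (Phi q ql l y (i + 1) j * Psi q l y (i + 1) j *
        (qint q l * qint q (l + 1)) ^ (j - (i + 1))) * hscal +
      (-(qint q l * qint q (l + 1) *
          ((q - q⁻¹) ^ 2 * (q ^ (y j - y i) * q) /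
            ((q ^ (y j - y i) - 1) * (q ^ (y j - y i) * q ^ 2 - 1)))) *
        (1 - qint q l * qint q (l + 1) *
          ((q - q⁻¹) ^ 2 * (q ^ (y j - y (i + 1)) * q) /
            ((q ^ (y j - y (i + 1)) - 1) * (q ^ (y j - y (i + 1)) * q ^ 2 - 1))))) * IH
  · -- base case
    have hji : j = i + 1 := by omega
    subst hji
    rw [Phi, Psi, if_neg hc, if_neg hc]
    simp only [Finset.Ico_self, Finset.prod_empty, mul_one, Nat.add_sub_cancel_left, pow_one]
    have h1a : 1 - q ^ (y (i + 1) - y i) ≠ 0 :=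
      sub_ne_zero.mpr (Ne.symm (rpow_ne_one' hq hq1 hu0))
    rw [xi, hu1, hu2]
    field_simp
    ring
termination_by j - i
decreasing_by omega

/-- Lemma 1: the diagonal element of the dynamical R-matrix factorizes:
`1 + Σ_{k ≤ i < j} Φ_{ij} Ψ_{ij} q^{y_j - y_i + 1} ([l][l+1])^{j-i}
   = ∏_{k ≤ i < j} (1 - [l][l+1] ξ(y_j - y_i))`. -/
theorem R_diagonal_factorizes (q : ℝ) (hq : 0 < q) (hq1 : q ≠ 1)
    (l : ℕ) (hl : 0 < l) (n : ℕ) (hn : 2 ≤ n) (y : ℕ → ℝ)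
    (hy : ∀ i j, 1 ≤ i → i ≤ n → 1 ≤ j → j ≤ n → i ≠ j →
      y j - y i ≠ 0 ∧ y j - y i ≠ -2)
    (ql : ℝ) (hql : ql = qint q (l + 1) * q ^ (-(l : ℝ)))
    (k j : ℕ) (hk : 1 ≤ k) (hkj : k < j) (hj : j ≤ n) :
    1 + ∑ i ∈ Finset.Ico k j,
          Phi q ql l y i j * Psi q l y i j * q ^ (y j - y i + 1) *
            (qint q l * qint q (l + 1)) ^ (j - i) =
      ∏ i ∈ Finset.Ico k j, (1 - qint q l * qint q (l + 1) * xi q (y j - y i)) := by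
  suffices H : ∀ d m, k ≤ m → m + d = j →
      1 + ∑ i ∈ Finset.Ico m j,
            Phi q ql l y i j * Psi q l y i j * q ^ (y j - y i + 1) *
              (qint q l * qint q (l + 1)) ^ (j - i) =
        ∏ i ∈ Finset.Ico m j, (1 - qint q l * qint q (l + 1) * xi q (y j - y i)) by
    exact H (j - k) k le_rfl (by omega)
  intro d
  induction d with
  | zero =>
    intro m hkm hmj
    have hmj' : m = j := by omega
    subst hmj'
    simp
  | succ d ihd =>
    intro m hkm hmd
    have hmj : m < j := by omega
    rw [Finset.sum_eq_sum_Ico_succ_bot hmj, Finset.prod_eq_prod_Ico_succ_bot hmj]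
    have IH2 := ihd (m + 1) (by omega) (by omega)
    have ht := term_eq q hq hq1 l hl ql hql y j m hmj
      (fun m' h1 h2 => hy m' j (by omega) (by omega) (by omega) hj (by omega))
    linear_combination IH2 + ht
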